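/- arXiv:2503.21439 — 2 statements merged into one kernel-verified Lean document; each statement's English description precedes it below -/
import Mathlib

section
/- Let X = ∑_{j≠i} X_j and Y = ∑_{j≠i} Y_j, where the X_j and Y_j are all independent and for each j the pair X_j, Y_j are identically distributed with values in {0,...,r-1}. Let D = X - Y. Then for sufficiently large n (the number of summands plus one), P[D = 0] ≥ 4/(9(2(r-1)√(3n)+1)). -/
/-!
The sums `S = ∑ X_j` and `T = ∑ Y_j` are independent and identically distributed integer
variables, so for every finite `J ⊆ ℤ`, by Cauchy–Schwarz,
`P[S = T] ≥ ∑_{k ∈ J} P[S = k]² ≥ P[S ∈ J]² / #J`.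
Popoviciu gives `Var S ≤ (n-1)(r-1)²/4 ≤ t²/3` for `t = (r-1)√(3n)`, so by Chebyshev the integers
within distance `t` of `E S` carry mass at least `2/3`; there are at most `2t+1` of them.
-/

open MeasureTheory ProbabilityTheory Finset

lemma MeasurableSpace.comap_pi_eq_iSup {Ω ι β : Type*} [MeasurableSpace β] (f : ι → Ω → β) :
    MeasurableSpace.comap (fun ω i ↦ f i ω) MeasurableSpace.pi =
      ⨆ i, MeasurableSpace.comap (f i) ‹_› := by
  simp only [MeasurableSpace.pi, MeasurableSpace.comap_iSup, MeasurableSpace.comap_comp]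
  rfl

lemma Int.card_Icc_ceil_floor_le {a b : ℝ} (h : a ≤ b + 1) :
    (#(Icc ⌈a⌉ ⌊b⌋) : ℝ) ≤ b - a + 1 := by
  rw [Int.card_Icc]
  rcases le_total (⌊b⌋ + 1 - ⌈a⌉) 0 with hle | hge
  · rw [Int.toNat_of_nonpos hle]
    simp only [Nat.cast_zero]
    linarith
  · rw [← Int.cast_natCast, Int.toNat_of_nonneg hge]
    push_cast
    linarith [Int.floor_le b, Int.le_ceil a]

namespace ProbabilityTheory

variable {Ω ι β : Type*} {mΩ : MeasurableSpace Ω} {μ : Measure Ω}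

lemma iIndepFun.indepFun_sumElim {κ : Type*} [MeasurableSpace β] {f : ι → Ω → β}
    {g : κ → Ω → β} (h : iIndepFun (Sum.elim f g) μ) (hf : ∀ i, Measurable (f i))
    (hg : ∀ j, Measurable (g j)) :
    IndepFun (fun ω i ↦ f i ω) (fun ω j ↦ g j ω) μ := by
  have hfg : ∀ k, Measurable (Sum.elim f g k) := Sum.forall.2 ⟨hf, hg⟩
  have := indep_iSup_of_disjoint (fun k ↦ (hfg k).comap_le) ((iIndepFun_iff_iIndep _ _ _).1 h)
    Set.isCompl_range_inl_range_inr.disjoint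
  rw [IndepFun_iff_Indep, MeasurableSpace.comap_pi_eq_iSup, MeasurableSpace.comap_pi_eq_iSup]
  simpa only [iSup_range, Sum.elim_inl, Sum.elim_inr] using this

lemma iIndepFun.variance_sum_le_of_bounded [IsProbabilityMeasure μ] {X : ι → Ω → ℝ}
    (hind : iIndepFun X μ) (hX : ∀ i, AEMeasurable (X i) μ) {a b : ℝ}
    (hab : ∀ i, ∀ᵐ ω ∂μ, X i ω ∈ Set.Icc a b) (s : Finset ι) :
    variance (∑ i ∈ s, X i) μ ≤ #s * ((b - a) / 2) ^ 2 := by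
  rw [IndepFun.variance_sum (fun i _ ↦ memLp_of_bounded (hab i) (hX i).aestronglyMeasurable 2)
    fun i _ j _ hij ↦ hind.indepFun hij]
  simpa using Finset.sum_le_sum fun i (_ : i ∈ s) ↦ variance_le_sq_of_bounded (hab i) (hX i)

lemma one_sub_variance_div_sq_le_measureReal_abs_sub_lt [IsProbabilityMeasure μ] {X : Ω → ℝ}
    (hX : MemLp X 2 μ) {t : ℝ} (ht : 0 < t) :
    1 - variance X μ / t ^ 2 ≤ μ.real {ω | |X ω - μ[X]| < t} := by
  have hcheb := ENNReal.toReal_le_of_le_ofReal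
    (div_nonneg (variance_nonneg X μ) (sq_nonneg t)) (meas_ge_le_variance_div_sq hX ht)
  have hmeas : NullMeasurableSet {ω | t ≤ |X ω - μ[X]|} μ :=
    nullMeasurableSet_le aemeasurable_const (hX.aestronglyMeasurable.aemeasurable.sub_const _).abs
  have hcompl : {ω | |X ω - μ[X]| < t} = {ω | t ≤ |X ω - μ[X]|}ᶜ := by
    ext ω; simp
  rw [hcompl, probReal_compl_eq_one_sub₀ hmeas]
  exact sub_le_sub_left hcheb 1

section Collision

variable [MeasurableSpace β] [MeasurableSingletonClass β] [IsFiniteMeasure μ] {S T : Ω → β}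

lemma IndepFun.sum_measureReal_fiber_sq_le (hS : Measurable S) (hT : Measurable T)
    (hST : IndepFun S T μ) (hid : IdentDistrib S T μ μ) (J : Finset β) :
    ∑ k ∈ J, μ.real (S ⁻¹' {k}) ^ 2 ≤ μ.real {ω | S ω = T ω} :=
  calc ∑ k ∈ J, μ.real (S ⁻¹' {k}) ^ 2 = ∑ k ∈ J, μ.real (S ⁻¹' {k} ∩ T ⁻¹' {k}) := by
        refine Finset.sum_congr rfl fun k _ ↦ ?_
        rw [measureReal_def, measureReal_def, hST.measure_inter_preimage_eq_mul _ _
          (.singleton k) (.singleton k), ← hid.measure_mem_eq (.singleton k),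
          ENNReal.toReal_mul, sq]
    _ = μ.real (⋃ k ∈ J, S ⁻¹' {k} ∩ T ⁻¹' {k}) :=
        (measureReal_biUnion_finset ((Set.pairwiseDisjoint_fiber S J).mono
          fun _ ↦ Set.inter_subset_left)
          fun k _ ↦ (hS (.singleton k)).inter (hT (.singleton k))).symm
    _ ≤ μ.real {ω | S ω = T ω} := measureReal_mono <| by
        simp only [Set.iUnion_subset_iff]
        rintro k - ω ⟨hSk, hTk⟩
        exact hSk.trans hTk.symm

lemma IndepFun.measureReal_preimage_sq_le_card_mul (hS : Measurable S) (hT : Measurable T)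
    (hST : IndepFun S T μ) (hid : IdentDistrib S T μ μ) (J : Finset β) :
    μ.real (S ⁻¹' J) ^ 2 ≤ #J * μ.real {ω | S ω = T ω} := by
  rw [← sum_measureReal_preimage_singleton J fun k _ ↦ hS (.singleton k)]
  exact sq_sum_le_card_mul_sum_sq.trans <| mul_le_mul_of_nonneg_left
    (hST.sum_measureReal_fiber_sq_le hS hT hid J) (Nat.cast_nonneg _)

end Collision

theorem IndepFun.le_measureReal_eq_of_variance_le [IsProbabilityMeasure μ] {S T : Ω → ℤ}
    (hS : Measurable S) (hT : Measurable T) (hST : IndepFun S T μ) (hid : IdentDistrib S T μ μ)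
    (hS2 : MemLp (fun ω ↦ (S ω : ℝ)) 2 μ) {t : ℝ} (ht : 0 < t)
    (hvar : variance (fun ω ↦ (S ω : ℝ)) μ ≤ t ^ 2 / 3) :
    4 / (9 * (2 * t + 1)) ≤ μ.real {ω | S ω = T ω} := by
  set m := μ[fun ω ↦ (S ω : ℝ)]
  set J := Icc ⌈m - t⌉ ⌊m + t⌋
  have hJ : (#J : ℝ) ≤ 2 * t + 1 := by
    convert Int.card_Icc_ceil_floor_le (a := m - t) (b := m + t) (by linarith) using 1
    ring
  have hwindow : 2 / 3 ≤ μ.real (S ⁻¹' J) := calc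
    2 / 3 ≤ 1 - variance (fun ω ↦ (S ω : ℝ)) μ / t ^ 2 := by
      rw [le_sub_comm, div_le_iff₀ (by positivity)]
      linarith
    _ ≤ μ.real {ω | |(S ω : ℝ) - m| < t} :=
      one_sub_variance_div_sq_le_measureReal_abs_sub_lt hS2 ht
    _ ≤ μ.real (S ⁻¹' J) := measureReal_mono fun ω (hω : |(S ω : ℝ) - m| < t) ↦ by
      obtain ⟨hlo, hhi⟩ := abs_lt.1 hω
      exact mem_Icc.2 ⟨Int.ceil_le.2 (by linarith), Int.le_floor.2 (by linarith)⟩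
  have hcoll := hST.measureReal_preimage_sq_le_card_mul hS hT hid J
  have hP := measureReal_nonneg (μ := μ) (s := {ω | S ω = T ω})
  rw [div_le_iff₀ (by positivity)]
  calc (4 : ℝ) = 9 * (2 / 3) ^ 2 := by norm_num
    _ ≤ 9 * μ.real (S ⁻¹' J) ^ 2 := by gcongr
    _ ≤ 9 * (#J * μ.real {ω | S ω = T ω}) := by gcongr
    _ ≤ μ.real {ω | S ω = T ω} * (9 * (2 * t + 1)) := by nlinarith

section FinValued

variable [Fintype ι] {r : ℕ} {X : ι → Ω → Fin r}

lemma _root_.Fin.val_cast_mem_Icc (x : Fin r) : ((x : ℕ) : ℝ) ∈ Set.Icc 0 ((r : ℝ) - 1) := by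
  have hlt : (x : ℕ) + 1 ≤ r := x.isLt
  simp only [Set.mem_Icc, Nat.cast_nonneg, true_and, le_sub_iff_add_le]
  exact_mod_cast hlt

lemma memLp_sum_val_fin [IsFiniteMeasure μ] (hX : ∀ i, Measurable (X i)) (p : ENNReal) :
    MemLp (fun ω ↦ ∑ i, ((X i ω : ℕ) : ℝ)) p μ := by
  have := memLp_finsetSum' (μ := μ) (p := p) univ fun i _ ↦
    memLp_of_bounded (.of_forall fun ω ↦ (X i ω).val_cast_mem_Icc)
      ((Measurable.of_discrete (f := fun x : Fin r ↦ ((x : ℕ) : ℝ))).comp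
        (hX i)).aestronglyMeasurable p
  simpa only [Finset.sum_fn] using this

lemma iIndepFun.variance_sum_val_fin_le [IsProbabilityMeasure μ] (hind : iIndepFun X μ)
    (hX : ∀ i, Measurable (X i)) :
    variance (fun ω ↦ ∑ i, ((X i ω : ℕ) : ℝ)) μ ≤ Fintype.card ι * (((r : ℝ) - 1) / 2) ^ 2 := by
  have := (hind.comp (fun _ x ↦ ((x : ℕ) : ℝ)) fun _ ↦ .of_discrete).variance_sum_le_of_bounded
    (fun i ↦ (Measurable.of_discrete.comp (hX i)).aemeasurable)
    (fun i ↦ .of_forall fun ω ↦ (X i ω).val_cast_mem_Icc) univ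
  simpa only [Finset.sum_fn, Function.comp_apply, sub_zero, card_univ] using this

end FinValued

end ProbabilityTheory

/-- Let `X = ∑_{j≠i} X_j` and `Y = ∑_{j≠i} Y_j` (here `n-1` summands),
where all `X_j, Y_j` are independent and, for each `j`, `X_j` and `Y_j` are
identically distributed with values in `{0,…,r-1}`. Then for sufficiently large
`n`, `P[D = 0] ≥ 4/(9(2(r-1)√(3n)+1))` where `D = X - Y`. -/
theorem prob_D_eq_zero (r : ℕ) (hr : 2 ≤ r) :
    ∃ N : ℕ, ∀ n : ℕ, N ≤ n →
    ∀ (Ω : Type) (_ : MeasureSpace Ω) (_ : IsProbabilityMeasure (ℙ : Measure Ω))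
      (X Y : Fin (n - 1) → Ω → Fin r),
      (∀ j, Measurable (X j)) → (∀ j, Measurable (Y j)) →
      iIndepFun (β := fun _ : Fin (n - 1) ⊕ Fin (n - 1) => Fin r)
        (Sum.elim X Y) ℙ →
      (∀ j, IdentDistrib (X j) (Y j) ℙ ℙ) →
      ENNReal.ofReal (4 / (9 * (2 * ((r : ℝ) - 1) * Real.sqrt (3 * n) + 1)))
        ≤ ℙ {ω | (∑ j, ((X j ω : ℤ))) = ∑ j, ((Y j ω : ℤ))} := by
  refine ⟨1, fun n hn Ω _ _ X Y hX hY hind hid ↦ ?_⟩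
  have hXind : iIndepFun X ℙ := (hind.precomp Sum.inl_injective :)
  have hYind : iIndepFun Y ℙ := (hind.precomp Sum.inr_injective :)
  let total : (Fin (n - 1) → Fin r) → ℤ := fun v ↦ ∑ j, (v j : ℤ)
  have htotal : Measurable total := .of_discrete
  have hST : IndepFun (total ∘ fun ω j ↦ X j ω) (total ∘ fun ω j ↦ Y j ω) ℙ :=
    (hind.indepFun_sumElim hX hY).comp htotal htotal
  have hid' : IdentDistrib (total ∘ fun ω j ↦ X j ω) (total ∘ fun ω j ↦ Y j ω) ℙ ℙ :=
    (IdentDistrib.pi hid hXind hYind).comp htotal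
  have hcast : (fun ω ↦ ((total ∘ fun ω j ↦ X j ω) ω : ℝ)) =
      fun ω ↦ ∑ j, ((X j ω : ℕ) : ℝ) := by
    ext ω; simp [total]
  have hr' : (1 : ℝ) ≤ r - 1 := by
    have : (2 : ℝ) ≤ r := by exact_mod_cast hr
    linarith
  set t := ((r : ℝ) - 1) * √(3 * n)
  have ht : 0 < t := mul_pos (by linarith) (Real.sqrt_pos.2 (by positivity))
  have hvar : variance (fun ω ↦ ∑ j, ((X j ω : ℕ) : ℝ)) ℙ ≤ t ^ 2 / 3 := by
    refine (hXind.variance_sum_val_fin_le hX).trans ?_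
    have hn' : ((n - 1 : ℕ) : ℝ) ≤ n := by exact_mod_cast n.sub_le 1
    rw [Fintype.card_fin, mul_pow, Real.sq_sqrt (by positivity)]
    nlinarith
  refine ENNReal.ofReal_le_of_le_toReal (le_of_eq_of_le (by ring)
    (hST.le_measureReal_eq_of_variance_le (htotal.comp (measurable_pi_lambda _ hX))
      (htotal.comp (measurable_pi_lambda _ hY)) hid' (hcast ▸ memLp_sum_val_fin hX 2) ht
      (hcast ▸ hvar)))
end

section
/- Let δ take value +1/K with probability z(1 + Kε/(2z)), value -1/K with probability z(1 - Kε/(2z)), and 0 otherwise, with z ∈ (0,1/4], K ≥ 1, 0 ≤ ε ≤ 2z/K. Then for all 0 ≤ λ ≤ K, E[exp(λδ)] ≤ exp(2z(λ/K)^2 + λε + (λ/K)^2·λε). -/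
/-!
Put `x = λ/K` and `a = Kε`. The masses at `±1/K` are `z ± a/2`, so
`E[exp(λδ)] = 1 + 2z(cosh x - 1) + a sinh x`. For `0 ≤ x ≤ 1` the Taylor bounds
`cosh x ≤ 1 + x²` and `sinh x ≤ x + x³`, followed by `1 + y ≤ exp y`, give the claim,
because `a x = λε`.
-/

open MeasureTheory ProbabilityTheory

namespace Real

theorem cosh_le_one_add_sq {x : ℝ} (hx : |x| ≤ 1) : cosh x ≤ 1 + x ^ 2 := by
  have hpos := (abs_le.1 (abs_exp_sub_one_sub_id_le hx)).2
  have hneg := (abs_le.1 (abs_exp_sub_one_sub_id_le (x := -x) (by rwa [abs_neg]))).2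
  rw [cosh_eq]
  linarith [neg_sq x]

theorem abs_sinh_sub_self_le {x : ℝ} (hx : |x| ≤ 1) : |sinh x - x| ≤ |x| ^ 3 := by
  have taylor : ∀ y : ℝ, |y| ≤ 1 → |exp y - (1 + y + y ^ 2 / 2)| ≤ |y| ^ 3 * (2 / 9) := by
    intro y hy
    -- `2 / 9` is the remainder factor `(n + 1) / (n! * n)` of `exp_bound` at `n = 3`
    have h := exp_bound hy (n := 3) (by norm_num)
    norm_num [Finset.sum_range_succ, Nat.factorial] at h
    convert h using 3
  have hpos := abs_le.1 (taylor x hx)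
  have hneg := abs_le.1 (taylor (-x) (by rwa [abs_neg]))
  rw [abs_neg] at hneg
  have hx3 : 0 ≤ |x| ^ 3 := by positivity
  rw [sinh_eq, abs_le]
  constructor <;> nlinarith [neg_sq x]

end Real

theorem three_point_mgf_le {z a x : ℝ} (hz : 0 ≤ z) (ha : 0 ≤ a) (hx0 : 0 ≤ x)
    (hx1 : x ≤ 1) :
    (z + a / 2) * Real.exp x + (z - a / 2) * Real.exp (-x) + (1 - 2 * z)
      ≤ Real.exp (2 * z * x ^ 2 + a * x + a * x ^ 3) := by
  have hx : |x| ≤ 1 := by rwa [abs_of_nonneg hx0]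
  have hcosh := Real.cosh_le_one_add_sq hx
  have hsinh := (abs_le.1 (Real.abs_sinh_sub_self_le hx)).2
  rw [abs_of_nonneg hx0] at hsinh
  calc (z + a / 2) * Real.exp x + (z - a / 2) * Real.exp (-x) + (1 - 2 * z)
      = 1 + 2 * z * (Real.cosh x - 1) + a * Real.sinh x := by
        rw [Real.cosh_eq, Real.sinh_eq]; ring
    _ ≤ 1 + (2 * z * x ^ 2 + a * x + a * x ^ 3) := by nlinarith
    _ ≤ _ := by linarith [Real.add_one_le_exp (2 * z * x ^ 2 + a * x + a * x ^ 3)]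

theorem integral_comp_eq_sum_of_forall_mem {Ω α E : Type*} [MeasurableSpace Ω]
    [MeasurableSpace α] [MeasurableSingletonClass α] [NormedAddCommGroup E] [NormedSpace ℝ E]
    [CompleteSpace E] {μ : Measure Ω} [IsFiniteMeasure μ] {X : Ω → α} (hX : Measurable X)
    {s : Finset α} (hs : ∀ ω, X ω ∈ s) (f : α → E) :
    ∫ ω, f (X ω) ∂μ = ∑ v ∈ s, μ.real (X ⁻¹' {v}) • f v := by
  have hfiber (v : α) : MeasurableSet (X ⁻¹' {v}) := hX (measurableSet_singleton v)
  have hdecomp :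
      (fun ω => f (X ω)) = fun ω => ∑ v ∈ s, (X ⁻¹' {v}).indicator (fun _ => f v) ω := by
    funext ω
    rw [Finset.sum_eq_single_of_mem (X ω) (hs ω) fun v _ hv => ?_]
    · simp
    · simp [Set.indicator_of_notMem, Ne.symm hv]
  rw [hdecomp, integral_finsetSum _ fun v _ => (integrable_const (f v)).indicator (hfiber v)]
  simp only [integral_indicator_const _ (hfiber _)]

theorem integral_comp_eq_of_three_valued {Ω α : Type*} [MeasurableSpace Ω]
    [MeasurableSpace α] [MeasurableSingletonClass α] {μ : Measure Ω} [IsProbabilityMeasure μ]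
    {X : Ω → α} (hX : Measurable X) {a b c : α} (hab : a ≠ b) (hac : a ≠ c) (hbc : b ≠ c)
    (hX₃ : ∀ ω, X ω = a ∨ X ω = b ∨ X ω = c) (f : α → ℝ) :
    ∫ ω, f (X ω) ∂μ = μ.real {ω | X ω = a} * f a + μ.real {ω | X ω = b} * f b
      + (1 - μ.real {ω | X ω = a} - μ.real {ω | X ω = b}) * f c := by
  classical
  have hs : ∀ ω, X ω ∈ ({a, b, c} : Finset α) := by simpa using hX₃
  have hsum (g : α → ℝ) : ∫ ω, g (X ω) ∂μ = μ.real {ω | X ω = a} * g a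
      + μ.real {ω | X ω = b} * g b + μ.real {ω | X ω = c} * g c := by
    rw [integral_comp_eq_sum_of_forall_mem hX hs, Finset.sum_insert (by simp [hab, hac]),
      Finset.sum_pair hbc, ← add_assoc]
    rfl
  have htotal := hsum fun _ => 1
  simp only [integral_const, probReal_univ, smul_eq_mul, mul_one] at htotal
  have hc : μ.real {ω | X ω = c} = 1 - μ.real {ω | X ω = a} - μ.real {ω | X ω = b} := by
    linarith
  rw [hsum f, hc]

/-- For the three-point random variable `δ` (value `+1/K` with
probability `z(1 + Kε/(2z))`, value `-1/K` with probability `z(1 - Kε/(2z))`,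
`0` otherwise), with `z ∈ (0,1/4]`, `K ≥ 1`, `0 ≤ ε ≤ 2z/K`, for all
`0 ≤ λ ≤ K` we have `E[exp(λδ)] ≤ exp(2z(λ/K)² + λε + (λ/K)²·λε)`. -/
theorem mgf_three_point {Ω : Type*} [MeasureSpace Ω]
    [IsProbabilityMeasure (ℙ : Measure Ω)]
    (K z ε : ℝ) (hz : z ∈ Set.Ioc (0 : ℝ) (1 / 4)) (hK : 1 ≤ K)
    (hε0 : 0 ≤ ε) (hε1 : ε ≤ 2 * z / K)
    (δ : Ω → ℝ) (hmeas : Measurable δ)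
    (hplus : (ℙ : Measure Ω) {ω : Ω | δ ω = 1 / K}
      = ENNReal.ofReal (z * (1 + K * ε / (2 * z))))
    (hminus : (ℙ : Measure Ω) {ω : Ω | δ ω = -(1 / K)}
      = ENNReal.ofReal (z * (1 - K * ε / (2 * z))))
    (hvals : ∀ ω : Ω, δ ω = 1 / K ∨ δ ω = -(1 / K) ∨ δ ω = 0) :
    ∀ lam : ℝ, 0 ≤ lam → lam ≤ K →
      ∫ ω, Real.exp (lam * δ ω) ∂(ℙ : Measure Ω)
        ≤ Real.exp (2 * z * (lam / K) ^ 2 + lam * ε + (lam / K) ^ 2 * (lam * ε)) := by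
  intro lam hlam0 hlamK
  have hz0 : 0 < z := hz.1
  have hK0 : 0 < K := by linarith
  have hKε : K * ε ≤ 2 * z := by rwa [le_div_iff₀ hK0, mul_comm] at hε1
  have hplus' : (ℙ : Measure Ω).real {ω | δ ω = 1 / K} = z + K * ε / 2 := by
    rw [measureReal_def, hplus, ENNReal.toReal_ofReal (by positivity)]
    field_simp
  have hminus' : (ℙ : Measure Ω).real {ω | δ ω = -(1 / K)} = z - K * ε / 2 := by
    rw [measureReal_def, hminus, ENNReal.toReal_ofReal]
    · field_simp
    · exact mul_nonneg hz0.le (by rw [sub_nonneg, div_le_one (by positivity)]; exact hKε)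
  have hKinv : 0 < 1 / K := by positivity
  rw [integral_comp_eq_of_three_valued hmeas (neg_lt_self hKinv).ne' hKinv.ne'
    (neg_ne_zero.2 hKinv.ne') hvals fun v => Real.exp (lam * v), hplus', hminus']
  calc _ = (z + K * ε / 2) * Real.exp (lam / K) + (z - K * ε / 2) * Real.exp (-(lam / K))
        + (1 - 2 * z) := by
        rw [mul_zero, Real.exp_zero, mul_neg, mul_one_div]; ring
    _ ≤ Real.exp (2 * z * (lam / K) ^ 2 + K * ε * (lam / K) + K * ε * (lam / K) ^ 3) :=
        three_point_mgf_le hz0.le (by positivity) (by positivity) ((div_le_one hK0).2 hlamK)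
    _ = _ := by congr 1; field_simp
end
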